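/- arXiv:2009.07830 — 3 statements merged into one kernel-verified Lean document; each statement's English description precedes it below -/
import Mathlib

section
/- Let G be a finite group, N a nonabelian minimal normal subgroup of G, p the largest prime dividing |N|, P a Sylow p-subgroup of N, and M a maximal subgroup of G with N_G(P) ≤ M. Then G = MN, the index |N : N ∩ M| is greater than 1, and |N : N ∩ M| is not a prime. -/
open scoped Pointwise

/-- A finite group is supersolvable if it admits a normal series (all terms normal
in the whole group) whose successive factors are cyclic. -/
def IsSupersolvable (G : Type*) [Group G] : Prop :=
  ∃ (n : ℕ) (s : Fin (n + 1) → Subgroup G) (hs : ∀ i, (s i).Normal),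
    Monotone s ∧ s 0 = ⊥ ∧ s (Fin.last n) = ⊤ ∧
    ∀ i : Fin n,
      haveI : ((s i.castSucc).subgroupOf (s i.succ)).Normal :=
        (hs i.castSucc).subgroupOf (s i.succ)
      IsCyclic (↥(s i.succ) ⧸ (s i.castSucc).subgroupOf (s i.succ))

/-- `N` is a minimal normal subgroup of `G`. -/
def IsMinimalNormal {G : Type*} [Group G] (N : Subgroup G) : Prop :=
  N.Normal ∧ N ≠ ⊥ ∧ ∀ K : Subgroup G, K.Normal → K ≤ N → K = ⊥ ∨ K = N

/-- The socle: the subgroup generated by all minimal normal subgroups. -/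
def socle (G : Type*) [Group G] : Subgroup G :=
  ⨆ N ∈ {N : Subgroup G | IsMinimalNormal N}, N

/-- The generalized Fitting subgroup `F̃(G)`: the preimage of `Soc(G/Φ(G))`. -/
def genFitting (G : Type*) [Group G] : Subgroup G :=
  (socle (G ⧸ frattini G)).comap (QuotientGroup.mk' (frattini G))

/-- The Fitting subgroup: the subgroup generated by all nilpotent normal subgroups. -/
def fitting (G : Type*) [Group G] : Subgroup G :=
  ⨆ N ∈ {N : Subgroup G | N.Normal ∧ Group.IsNilpotent N}, N

/-!
By Frattini's argument `G = N_G(P) N ≤ M N`, so `r := |N : N ∩ M|` equals `|G : M|`, and `r > 1`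
because `N ≰ M`. Minimality of `N` forces `N ∩ core_G(M) = 1`, so `N` embeds in the symmetric group
on `G / M`, and `p ∣ |N|` divides `r!`, giving `p ≤ r`. A prime `r` would divide `|N|`, hence
`r ≤ p`, so `r = p`; but `P ≤ N ∩ M` makes `r` prime to `p`.
-/

theorem IsMinimalNormal.inf_eq_bot_of_not_le {G : Type*} [Group G] {N K : Subgroup G}
    (hN : IsMinimalNormal N) [K.Normal] (hNK : ¬ N ≤ K) : N ⊓ K = ⊥ :=
  haveI := hN.1
  (hN.2.2 _ inferInstance inf_le_left).resolve_right fun h => hNK (h ▸ inf_le_right)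

namespace Subgroup

variable {G : Type*} [Group G]

theorem relIndex_eq_index_of_sup_eq_top {M N : Subgroup G} [N.Normal] [N.FiniteIndex]
    (h : M ⊔ N = ⊤) : M.relIndex N = M.index := by
  have key : M.relIndex N * N.index = N.index * M.index := by
    rw [← inf_relIndex_right, relIndex_mul_index inf_le_right, inf_comm,
      ← relIndex_mul_index inf_le_right, inf_relIndex_right, ← relIndex_sup_right, h,
      relIndex_top_right]
  rw [mul_comm] at key
  exact Nat.eq_of_mul_eq_mul_left (Nat.pos_of_ne_zero FiniteIndex.index_ne_zero) key

theorem card_dvd_factorial_index_of_inf_normalCore_eq_bot {N M : Subgroup G} [M.FiniteIndex]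
    (h : N ⊓ M.normalCore = ⊥) : Nat.card N ∣ M.index.factorial := by
  let φ : N →* Equiv.Perm (G ⧸ M) := (MulAction.toPermHom G (G ⧸ M)).comp N.subtype
  have hφ : Function.Injective φ := by
    rw [← MonoidHom.ker_eq_bot_iff, eq_bot_iff]
    intro n hn
    have hn' : (n : G) ∈ N ⊓ M.normalCore := ⟨n.2, by rwa [normalCore_eq_ker]⟩
    simpa [h] using hn'
  rw [index_eq_card, ← Nat.card_perm]
  exact card_dvd_of_injective φ hφ

end Subgroup

theorem Sylow.not_dvd_relIndex_of_map_le {G : Type*} [Group G] {p : ℕ} [Fact p.Prime]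
    {N M : Subgroup G} [Finite N] (P : Sylow p N) (hPM : (P : Subgroup N).map N.subtype ≤ M) :
    ¬ p ∣ M.relIndex N := fun hp =>
  P.not_dvd_index (hp.trans (Subgroup.index_dvd_of_le fun x hx => hPM ⟨x, hx, rfl⟩))

theorem statement5_general {G : Type*} [Group G] [Finite G] (N : Subgroup G)
    (hmin : IsMinimalNormal N)
    (p : ℕ) [Fact p.Prime] (hdvd : p ∣ Nat.card N)
    (hmaxprime : ∀ q : ℕ, q.Prime → q ∣ Nat.card N → q ≤ p)
    (P : Sylow p ↥N)
    (M : Subgroup G) (hM : IsCoatom M)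
    (hnorm : Subgroup.normalizer (((P : Subgroup ↥N).map N.subtype : Subgroup G) : Set G) ≤ M) :
    (M : Set G) * (N : Set G) = Set.univ ∧
    1 < M.relIndex N ∧ ¬ (M.relIndex N).Prime := by
  have := hmin.1
  have hMN : M ⊔ N = ⊤ := top_unique <|
    (Sylow.normalizer_sup_eq_top P).ge.trans (sup_le_sup_right hnorm N)
  have hNM : ¬ N ≤ M := fun h => hM.1 (by rwa [sup_eq_left.mpr h] at hMN)
  have hindex : M.relIndex N = M.index := Subgroup.relIndex_eq_index_of_sup_eq_top hMN
  refine ⟨by rw [← Subgroup.mul_normal, hMN, Subgroup.coe_top], ?_, fun hr => ?_⟩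
  · rw [hindex]
    exact Subgroup.one_lt_index_of_ne_top fun h => hNM (h ▸ le_top)
  have hcore : N ⊓ M.normalCore = ⊥ :=
    hmin.inf_eq_bot_of_not_le fun h => hNM (h.trans M.normalCore_le)
  have hpr : p ≤ M.relIndex N := hindex ▸ (Nat.Prime.dvd_factorial Fact.out).mp
    (hdvd.trans (Subgroup.card_dvd_factorial_index_of_inf_normalCore_eq_bot hcore))
  have hrp : M.relIndex N = p :=
    le_antisymm (hmaxprime _ hr (M.relIndex_dvd_card N)) hpr
  exact P.not_dvd_relIndex_of_map_le (Subgroup.le_normalizer.trans hnorm) (hrp ▸ dvd_rfl)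

/-- Let `N` be a nonabelian minimal normal subgroup of a finite group `G`, `p` the
largest prime dividing `|N|`, `P` a Sylow `p`-subgroup of `N`, and `M` a maximal
subgroup of `G` containing `N_G(P)`.  Then `G = MN`, and `|N : N ∩ M|` is greater
than 1 and is not a prime. -/
theorem statement5 {G : Type*} [Group G] [Finite G] (N : Subgroup G)
    (hmin : IsMinimalNormal N)
    (hnonab : ¬ ∀ a ∈ N, ∀ b ∈ N, a * b = b * a)
    (p : ℕ) [Fact p.Prime] (hdvd : p ∣ Nat.card N)
    (hmaxprime : ∀ q : ℕ, q.Prime → q ∣ Nat.card N → q ≤ p)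
    (P : Sylow p ↥N)
    (M : Subgroup G) (hM : IsCoatom M)
    (hnorm : Subgroup.normalizer (((P : Subgroup ↥N).map N.subtype : Subgroup G) : Set G) ≤ M) :
    (M : Set G) * (N : Set G) = Set.univ ∧
    1 < M.relIndex N ∧ ¬ (M.relIndex N).Prime :=
  statement5_general N hmin p hdvd hmaxprime P M hM hnorm
end

section
/- Let V = (ZMod 5)^(Fin 5) be the natural permutation module for the alternating group A₅ on five letters over the field with 5 elements, where A₅ acts by permuting coordinates. Then every nonzero A₅-invariant submodule of V contains the all-ones vector (1,1,1,1,1); in particular, the span of the all-ones vector (which is one-dimensional and A₅-invariant) is the unique minimal nonzero A₅-submodule of V, i.e. the socle of V is one-dimensional. -/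
/-! The 5-cycle `c` lies in `A₅`, and in characteristic 5 we have `(c - 1)^5 = c^5 - 1 = 0`.
So `c - 1` is nilpotent on every nonzero invariant subspace `U` and kills some nonzero `u ∈ U`.
Being fixed by a transitive permutation, `u` is constant, i.e. a nonzero multiple of the
all-ones vector. -/

open Equiv Set

theorem IsNilpotent.sub_one_of_pow_eq_one {A : Type*} [Ring A] {p : ℕ} [ExpChar A p]
    {a : A} (h : a ^ p = 1) : IsNilpotent (a - 1) :=
  ⟨p, by rw [sub_pow_expChar_of_commute p (Commute.one_right a), h, one_pow, sub_self]⟩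

theorem Submodule.exists_mem_ne_zero_apply_eq_zero_of_isNilpotent {R M : Type*} [Semiring R]
    [AddCommMonoid M] [Module R M] {f : Module.End R M} (hf : IsNilpotent f)
    {U : Submodule R M} (hU : MapsTo f U U) (hne : U ≠ ⊥) : ∃ v ∈ U, v ≠ 0 ∧ f v = 0 := by
  obtain ⟨n, hn⟩ := hf
  obtain ⟨v, hvU, hv0⟩ := (Submodule.ne_bot_iff U).mp hne
  have hnv : (f ^ n) v = 0 := by simp [hn]
  clear hn
  induction n generalizing v with
  | zero => exact absurd hnv hv0
  | succ n ih =>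
    by_cases hfv : f v = 0
    · exact ⟨v, hvU, hv0, hfv⟩
    · exact ih (f v) (hU hvU) hfv (by rwa [pow_succ, Module.End.mul_apply] at hnv)

theorem Fin.eq_const_of_comp_finRotate_eq {α : Type*} {n : ℕ} {v : Fin (n + 1) → α}
    (h : v ∘ finRotate (n + 1) = v) : v = fun _ => v 0 := by
  funext i
  induction i using Fin.induction with
  | zero => rfl
  | succ j ih => rw [← ih, ← Fin.coeSucc_eq_succ, ← finRotate_apply]; exact congrFun h _

theorem finRotate_pow_self {n : ℕ} (hn : 2 ≤ n) : finRotate n ^ n = 1 := by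
  have h := Perm.lcm_cycleType (finRotate n)
  rw [cycleType_finRotate_of_le hn, Multiset.lcm_singleton, normalize_eq] at h
  simpa [← h] using pow_orderOf_eq_one (finRotate n)

theorem const_one_mem_of_forall_comp_finRotate_mem {K : Type*} [Field K] {p : ℕ} [hp : Fact p.Prime]
    [CharP K p] {U : Submodule K (Fin p → K)} (hU : ∀ v ∈ U, v ∘ finRotate p ∈ U) (hne : U ≠ ⊥) :
    (fun _ => 1) ∈ U := by
  obtain ⟨n, rfl⟩ := Nat.exists_eq_succ_of_ne_zero hp.out.ne_zero
  have : CharP (Module.End K (Fin (n + 1) → K)) (n + 1) := charP_of_injective_algebraMap' K _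
  set T := DistribMulAction.toModuleEnd K (Fin (n + 1) → K) (DomMulAct.mk (finRotate (n + 1)))
  have hT (v : Fin (n + 1) → K) : T v = v ∘ finRotate (n + 1) := rfl
  have hTp : T ^ (n + 1) = 1 := by
    rw [← map_pow, ← DomMulAct.mk_pow, finRotate_pow_self hp.out.two_le, DomMulAct.mk_one, map_one]
  obtain ⟨v, hvU, hv0, hTv⟩ := Submodule.exists_mem_ne_zero_apply_eq_zero_of_isNilpotent
    (IsNilpotent.sub_one_of_pow_eq_one hTp) (fun v hv => U.sub_mem (hU v hv) hv) hne
  have hv : v = fun _ => v 0 :=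
    Fin.eq_const_of_comp_finRotate_eq (by simpa [hT, sub_eq_zero] using hTv)
  have hv0' : v 0 ≠ 0 := fun h => hv0 (by rw [hv, h]; rfl)
  convert U.smul_mem (v 0)⁻¹ hvU
  rw [hv]
  simp [hv0']

/-- In the permutation module `V = (ZMod 5)^(Fin 5)` for `A₅` (acting by
`(σ • v) i = v (σ⁻¹ i)`), every nonzero `A₅`-invariant submodule contains the
all-ones vector; in particular the span of the all-ones vector is a
one-dimensional invariant submodule contained in every nonzero invariant
submodule (so the socle of `V` is one-dimensional). -/
theorem statement9 :
    (∀ U : Submodule (ZMod 5) (Fin 5 → ZMod 5),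
      (∀ σ ∈ alternatingGroup (Fin 5), ∀ v ∈ U, (fun i => v (σ⁻¹ i)) ∈ U) →
      U ≠ ⊥ → (fun _ => 1 : Fin 5 → ZMod 5) ∈ U) ∧
    Module.finrank (ZMod 5)
      (Submodule.span (ZMod 5) {(fun _ => 1 : Fin 5 → ZMod 5)}) = 1 ∧
    (∀ σ ∈ alternatingGroup (Fin 5),
      ∀ v ∈ Submodule.span (ZMod 5) {(fun _ => 1 : Fin 5 → ZMod 5)},
        (fun i => v (σ⁻¹ i)) ∈ Submodule.span (ZMod 5) {(fun _ => 1 : Fin 5 → ZMod 5)}) ∧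
    (∀ U : Submodule (ZMod 5) (Fin 5 → ZMod 5),
      (∀ σ ∈ alternatingGroup (Fin 5), ∀ v ∈ U, (fun i => v (σ⁻¹ i)) ∈ U) →
      U ≠ ⊥ → Submodule.span (ZMod 5) {(fun _ => 1 : Fin 5 → ZMod 5)} ≤ U) := by
  have : Fact (Nat.Prime 5) := ⟨by norm_num⟩
  have hrot : (finRotate 5)⁻¹ ∈ alternatingGroup (Fin 5) := by
    rw [inv_mem_iff, Perm.mem_alternatingGroup, sign_finRotate]
    decide
  have ones_mem (U : Submodule (ZMod 5) (Fin 5 → ZMod 5))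
      (hU : ∀ σ ∈ alternatingGroup (Fin 5), ∀ v ∈ U, (fun i => v (σ⁻¹ i)) ∈ U) (hne : U ≠ ⊥) :
      (fun _ => 1 : Fin 5 → ZMod 5) ∈ U :=
    const_one_mem_of_forall_comp_finRotate_mem (fun v hv => by
      have := hU _ hrot v hv; rwa [inv_inv] at this) hne
  refine ⟨ones_mem, finrank_span_singleton (Function.ne_iff.mpr ⟨0, one_ne_zero⟩), ?_,
    fun U hU hne => (Submodule.span_singleton_le_iff_mem _ _).mpr (ones_mem U hU hne)⟩
  intro σ _ v hv
  obtain ⟨c, rfl⟩ := Submodule.mem_span_singleton.mp hv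
  exact hv
end

section
/- Let G be a finite group, N a normal subgroup of G, and M a maximal subgroup of G with G = MN such that the index |N : N ∩ M| is a prime q. If in addition N is a minimal normal subgroup of G isomorphic to a direct power of a nonabelian simple group S, then every prime divisor of |S| is at most q. -/
open scoped Pointwise

/-! The intersection `N ∩ M` has prime index `q` in `N`, so `N` acts on its `q` cosets and the
kernel `K` of this action (the normal core of `N ∩ M` in `N`) is a proper normal subgroup of `N`
with `|N : K|` dividing `q!`. A proper normal subgroup of a direct power `S^k` of a nonabelian simple
group lies in the kernel of some coordinate projection, so `S` is a quotient of `N / K`, and every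
prime divisor of `|S|` divides `q!`. -/

open Subgroup

theorem Subgroup.index_normalCore_dvd_factorial {G : Type*} [Group G] (H : Subgroup G)
    [H.FiniteIndex] :
    H.normalCore.index ∣ H.index.factorial := by
  rw [normalCore_eq_ker, index_ker, index_eq_card, ← Nat.card_perm]
  exact card_subgroup_dvd_card _

section PiSimple

variable {ι : Type*} {S : ι → Type*} [∀ i, Group (S i)] {P : Subgroup (∀ i, S i)}

theorem Subgroup.Normal.mulSingle_mem_of_map_eval_ne_bot [DecidableEq ι] (hP : P.Normal) {i : ι}
    (hS : IsSimpleGroup (S i)) (hnab : ¬ ∀ a b : S i, a * b = b * a)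
    (hPi : P.map (Pi.evalMonoidHom S i) ≠ ⊥) (s : S i) : Pi.mulSingle i s ∈ P := by
  have hmap : P.map (Pi.evalMonoidHom S i) = ⊤ :=
    (hS.eq_bot_or_eq_top_of_normal _
      (hP.map _ fun s => ⟨Pi.mulSingle i s, Pi.mulSingle_eq_same i s⟩)).resolve_left hPi
  have hcomm : ∀ p ∈ P, ∀ t : S i, Pi.mulSingle i (p i * t * (p i)⁻¹ * t⁻¹) ∈ P := by
    intro p hp t
    have heq : p * (Pi.mulSingle i t * p⁻¹ * (Pi.mulSingle i t)⁻¹)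
        = Pi.mulSingle i (p i * t * (p i)⁻¹ * t⁻¹) := by
      funext j
      by_cases hji : j = i
      · subst hji
        simp [mul_assoc]
      · simp only [Pi.mul_apply, Pi.inv_apply, Pi.mulSingle_eq_of_ne hji]
        group
    exact heq ▸ P.mul_mem hp (hP.conj_mem _ (P.inv_mem hp) _)
  -- `T` is normal in `S i` and contains every commutator `[p i, t]`; these are not all trivial
  -- because `p i` ranges over the nonabelian group `S i`.
  set T := P.comap (MonoidHom.mulSingle S i)
  have hT : T = ⊤ := by
    refine (hS.eq_bot_or_eq_top_of_normal T (hP.comap _)).resolve_left fun hT => hnab fun a b => ?_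
    obtain ⟨p, hp, rfl⟩ := mem_map.mp (hmap.symm ▸ mem_top a : a ∈ P.map (Pi.evalMonoidHom S i))
    have : p i * b * (p i)⁻¹ * b⁻¹ ∈ T := hcomm p hp b
    rwa [hT, mem_bot, mul_inv_eq_one, mul_inv_eq_iff_eq_mul] at this
  exact (hT ▸ mem_top s : s ∈ T)

theorem Subgroup.Normal.exists_le_ker_eval [Finite ι] (hS : ∀ i, IsSimpleGroup (S i))
    (hnab : ∀ i, ¬ ∀ a b : S i, a * b = b * a) (hP : P.Normal) (hne : P ≠ ⊤) :
    ∃ i, P ≤ (Pi.evalMonoidHom S i).ker := by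
  classical
  by_contra! h
  refine hne (eq_top_iff.mpr fun x _ => pi_mem_of_mulSingle_mem x fun i => ?_)
  exact hP.mulSingle_mem_of_map_eval_ne_bot (hS i) (hnab i)
    (fun hbot => h i ((map_eq_bot_iff _).mp hbot)) (x i)

end PiSimple

theorem card_dvd_card_quotient_of_le_ker {G H : Type*} [Group G] [Group H] (f : G →* H)
    (hf : Function.Surjective f) (K : Subgroup G) [K.Normal] (hK : K ≤ f.ker) :
    Nat.card H ∣ Nat.card (G ⧸ K) :=
  card_dvd_of_surjective _ (QuotientGroup.lift_surjective_of_surjective K f hf hK)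

theorem exists_card_dvd_card_quotient_of_mulEquiv_pi {N ι : Type*} [Group N] [Finite ι]
    {S : ι → Type*} [∀ i, Group (S i)] (hS : ∀ i, IsSimpleGroup (S i))
    (hnab : ∀ i, ¬ ∀ a b : S i, a * b = b * a) (e : N ≃* ∀ i, S i)
    (K : Subgroup N) [hK : K.Normal] (hne : K ≠ ⊤) :
    ∃ i, Nat.card (S i) ∣ Nat.card (N ⧸ K) := by
  have hne' : K.map e.toMonoidHom ≠ ⊤ := fun h =>
    hne (map_injective e.injective (h.trans (map_top_of_surjective _ e.surjective).symm))
  obtain ⟨i, hi⟩ := (hK.map e.toMonoidHom e.surjective).exists_le_ker_eval hS hnab hne'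
  refine ⟨i, card_dvd_card_quotient_of_le_ker ((Pi.evalMonoidHom S i).comp e.toMonoidHom)
    ((Function.surjective_eval i).comp e.surjective) K ?_⟩
  rw [← MonoidHom.comap_ker]
  exact map_le_iff_le_comap.mp hi

theorem statement13_general {G : Type*} [Group G] [Finite G] (N M : Subgroup G)
    (q : ℕ) (hq : q.Prime) (hrel : M.relIndex N = q)
    (S : Type*) [Group S] (hS : IsSimpleGroup S)
    (hnab : ¬ ∀ a b : S, a * b = b * a)
    (k : ℕ) (hiso : Nonempty (↥N ≃* (Fin k → S))) :
    ∀ r : ℕ, r.Prime → r ∣ Nat.card S → r ≤ q := by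
  intro r hr hrS
  obtain ⟨e⟩ := hiso
  set H := M.subgroupOf N
  have hH : H.index = q := hrel
  have hcore : H.normalCore ≠ ⊤ := fun h =>
    hq.ne_one (hH ▸ index_eq_one.mpr (top_le_iff.mp (h ▸ normalCore_le H)))
  obtain ⟨-, hdvd⟩ := exists_card_dvd_card_quotient_of_mulEquiv_pi (fun _ => hS) (fun _ => hnab) e
    H.normalCore hcore
  rw [← index_eq_card] at hdvd
  exact hr.dvd_factorial.mp (hrS.trans (hdvd.trans (hH ▸ H.index_normalCore_dvd_factorial)))

/-- Let `G` be a finite group, `N ⊴ G`, and `M` a maximal subgroup of `G` with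
`G = MN` and `|N : N ∩ M|` a prime `q`.  If moreover `N` is a minimal normal
subgroup of `G` isomorphic to a direct power of a nonabelian simple group `S`,
then every prime divisor of `|S|` is at most `q`. -/
theorem statement13 {G : Type*} [Group G] [Finite G] (N M : Subgroup G) [N.Normal]
    (hM : IsCoatom M) (hMN : (M : Set G) * (N : Set G) = Set.univ)
    (q : ℕ) (hq : q.Prime) (hrel : M.relIndex N = q)
    (hmin : IsMinimalNormal N)
    (S : Type*) [Group S] [Finite S] (hS : IsSimpleGroup S)
    (hnab : ¬ ∀ a b : S, a * b = b * a)
    (k : ℕ) (hk : 0 < k) (hiso : Nonempty (↥N ≃* (Fin k → S))) :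
    ∀ r : ℕ, r.Prime → r ∣ Nat.card S → r ≤ q :=
  statement13_general N M q hq hrel S hS hnab k hiso
end
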